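/- In the 3-player construction above, in every envy-free complete connected division player 1 must receive the rightmost piece, and this piece must contain the interval (2/3 + 2ε, 1). -/

import Mathlib

open MeasureTheory Set
open scoped ENNReal

/-- A connected division of the cake `[0,1]` among `n` players: each player gets an
open interval, the intervals are pairwise disjoint and contained in `[0,1]`. -/
structure ConnDiv (n : ℕ) where
  pieces : Fin n → Set ℝ
  isInterval : ∀ i, ∃ a b : ℝ, pieces i = Set.Ioo a b
  subset : ∀ i, pieces i ⊆ Set.Icc (0:ℝ) 1
  disj : Pairwise fun i j => Disjoint (pieces i) (pieces j)

/-- A connected division is complete if the closures of the pieces cover `[0,1]`. -/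
def ConnDiv.Complete {n : ℕ} (d : ConnDiv n) : Prop :=
  Set.Icc (0:ℝ) 1 ⊆ ⋃ i, closure (d.pieces i)

/-- Envy-freeness: every player weakly prefers her own piece. -/
def EnvyFree {n : ℕ} (v : Fin n → Measure ℝ) (d : ConnDiv n) : Prop :=
  ∀ i j, v i (d.pieces j) ≤ v i (d.pieces i)

/-- Utilitarian welfare: sum of own-piece values. -/
noncomputable def util {n : ℕ} (v : Fin n → Measure ℝ) (d : ConnDiv n) : ℝ≥0∞ :=
  ∑ i, v i (d.pieces i)

/-- Egalitarian welfare: minimum own-piece value. -/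
noncomputable def egal {n : ℕ} (v : Fin n → Measure ℝ) (d : ConnDiv n) : ℝ≥0∞ :=
  ⨅ i, v i (d.pieces i)

/-- The uniform measure of total mass `m` on the interval `(a,b)`. -/
noncomputable def unifOn (a b m : ℝ) : Measure ℝ :=
  ENNReal.ofReal (m / (b - a)) • volume.restrict (Set.Ioo a b)

/-- Player 1's measure: value `1/2 - ε` uniformly on `(0,ε)`, value `3ε`
uniformly on `(2/3, 2/3+3ε)`, value `1/2 - 2ε` uniformly on `(1-ε, 1)`. -/
noncomputable def w1 (ε : ℝ) : Measure ℝ :=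
  unifOn 0 ε (1/2 - ε) + unifOn (2/3) (2/3 + 3*ε) (3*ε) + unifOn (1-ε) 1 (1/2 - 2*ε)

/-- The uniform (Lebesgue) measure on `[0,1]`. -/
noncomputable def wU : Measure ℝ := volume.restrict (Set.Icc (0:ℝ) 1)

noncomputable def vEg3 (ε : ℝ) : Fin 3 → Measure ℝ := ![w1 ε, wU, wU]

/-!
Envy-freeness implies proportionality: a player whose measure has no atoms values her own
piece at least a third of the cake, since the closures of the three pieces cover `[0,1]`.
If a Lebesgue player held the rightmost piece `(a, 1)`, this would force `a ≤ 2/3`, so that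
piece would be worth at least `1/2 + ε` to player 1 (index `0` of `vEg3`), while her own
piece lies inside `(0, 2/3)` and is worth at most `1/2 - ε`. Hence player 1 holds `(a, 1)`.
The leftmost piece `(0, b)` then belongs to a Lebesgue player, so `b ≥ 1/3` and player 1
values it at `1/2 - ε`; but for `a > 2/3 + 2ε` her own piece `(a, 1)` is worth less than
`ε + (1/2 - 2ε)`.
-/

theorem Set.Ioo_disjoint_Ioo_of_le {α : Type*} [Preorder α] {a b c d : α} (h : b ≤ c) :
    Disjoint (Ioo a b) (Ioo c d) :=
  (Iio_disjoint_Ici h).mono Ioo_subset_Iio_self (Ioo_subset_Ioi_self.trans Ioi_subset_Ici_self)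

theorem MeasureTheory.measure_closure_Ioo {α : Type*} [PartialOrder α] [TopologicalSpace α]
    [OrderClosedTopology α] [MeasurableSpace α] (μ : Measure α) [NullSingletonClass μ]
    (a b : α) : μ (closure (Ioo a b)) = μ (Ioo a b) :=
  le_antisymm
    ((measure_mono (closure_minimal Ioo_subset_Icc_self isClosed_Icc)).trans
      (measure_congr Ioo_ae_eq_Icc).ge)
    (measure_mono subset_closure)

namespace ConnDiv

variable {n : ℕ} {d : ConnDiv n}

theorem bounds_of_eq_Ioo {i : Fin n} {a b : ℝ} (h : d.pieces i = Ioo a b) (hab : a < b) :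
    0 ≤ a ∧ b ≤ 1 := by
  have hsub := closure_minimal (h ▸ d.subset i) isClosed_Icc
  rw [closure_Ioo hab.ne] at hsub
  exact (Icc_subset_Icc_iff hab.le).1 hsub

theorem Complete.exists_eq_Ioo_mem_Icc (hc : d.Complete) {x : ℝ} (hx : x ∈ Icc 0 1) :
    ∃ i a b, a < b ∧ d.pieces i = Ioo a b ∧ x ∈ Icc a b := by
  obtain ⟨i, hi⟩ := mem_iUnion.1 (hc hx)
  obtain ⟨a, b, h⟩ := d.isInterval i
  rw [h] at hi
  rcases lt_or_ge a b with hab | hba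
  · exact ⟨i, a, b, hab, h, by rwa [closure_Ioo hab.ne] at hi⟩
  · simp [hba] at hi

theorem Complete.exists_eq_Ioo_one (hc : d.Complete) :
    ∃ k a, a < 1 ∧ d.pieces k = Ioo a 1 := by
  obtain ⟨k, a, b, hab, h, -, hb⟩ := hc.exists_eq_Ioo_mem_Icc (right_mem_Icc.2 zero_le_one)
  obtain rfl : b = 1 := le_antisymm (bounds_of_eq_Ioo h hab).2 hb
  exact ⟨k, a, hab, h⟩

theorem Complete.exists_eq_zero_Ioo (hc : d.Complete) :
    ∃ j b, 0 < b ∧ d.pieces j = Ioo 0 b := by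
  obtain ⟨j, a, b, hab, h, ha, -⟩ := hc.exists_eq_Ioo_mem_Icc (left_mem_Icc.2 zero_le_one)
  obtain rfl : a = 0 := le_antisymm ha (bounds_of_eq_Ioo h hab).1
  exact ⟨j, b, hab, h⟩

theorem subset_Ioo_of_eq_Ioo_one {j k : Fin n} (hjk : j ≠ k) {a : ℝ}
    (hk : d.pieces k = Ioo a 1) : d.pieces j ⊆ Ioo 0 a := by
  obtain ⟨c, e, hj⟩ := d.isInterval j
  rw [hj]
  rcases le_or_gt e c with hec | hce
  · simp [hec]
  obtain ⟨hc0, he1⟩ := bounds_of_eq_Ioo hj hce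
  have hdisj : Disjoint (d.pieces j) (d.pieces k) := d.disj hjk
  rw [hj, hk, Ioo_disjoint_Ioo, min_eq_left he1] at hdisj
  exact Ioo_subset_Ioo hc0 (le_of_not_gt fun hae => (max_lt hce hae).not_ge hdisj)

theorem Complete.measure_Icc_le_sum (hc : d.Complete) (μ : Measure ℝ) [NullSingletonClass μ] :
    μ (Icc 0 1) ≤ ∑ i, μ (d.pieces i) :=
  calc μ (Icc 0 1) ≤ μ (⋃ i, closure (d.pieces i)) := measure_mono hc
    _ ≤ ∑ i, μ (closure (d.pieces i)) := measure_iUnion_fintype_le μ _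
    _ = ∑ i, μ (d.pieces i) := Finset.sum_congr rfl fun i _ => by
        obtain ⟨a, b, h⟩ := d.isInterval i
        rw [h, measure_closure_Ioo]

end ConnDiv

theorem wU_Icc : wU (Icc 0 1) = 1 := by
  rw [wU, Measure.restrict_apply measurableSet_Icc, inter_self, Real.volume_Icc]
  norm_num

instance : NullSingletonClass wU := by
  unfold wU
  infer_instance

namespace EnvyFree

variable {n : ℕ} {v : Fin n → Measure ℝ} {d : ConnDiv n}

theorem measure_Icc_le_card_mul (hEF : EnvyFree v d) (hc : d.Complete) (i : Fin n)
    [NullSingletonClass (v i)] : v i (Icc 0 1) ≤ n * v i (d.pieces i) :=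
  calc v i (Icc 0 1) ≤ ∑ j, v i (d.pieces j) := hc.measure_Icc_le_sum (v i)
    _ ≤ Finset.univ.card • v i (d.pieces i) :=
        Finset.sum_le_card_nsmul _ _ _ fun j _ => hEF i j
    _ = n * v i (d.pieces i) := by simp [nsmul_eq_mul]

theorem one_div_le_of_eq_wU (hEF : EnvyFree v d) (hc : d.Complete) {i : Fin n}
    (hi : v i = wU) {a b : ℝ} (h : d.pieces i = Ioo a b) : 1 / (n : ℝ) ≤ b - a := by
  have : NullSingletonClass (v i) := hi ▸ inferInstance
  have hprop := hEF.measure_Icc_le_card_mul hc i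
  rw [hi, wU_Icc, h] at hprop
  have hlen : (1 : ℝ≥0∞) ≤ ENNReal.ofReal (n * (b - a)) :=
    calc 1 ≤ n * wU (Ioo a b) := hprop
      _ ≤ n * volume (Ioo a b) := by gcongr; exact Measure.restrict_le_self
      _ = ENNReal.ofReal (n * (b - a)) := by
          rw [Real.volume_Ioo, ENNReal.ofReal_mul (Nat.cast_nonneg n), ENNReal.ofReal_natCast]
  rw [ENNReal.one_le_ofReal] at hlen
  rw [div_le_iff₀ (Nat.cast_pos.2 i.pos)]
  linarith

end EnvyFree

section unifOn

variable {a b m : ℝ} {S : Set ℝ}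

theorem unifOn_apply (a b m : ℝ) (S : Set ℝ) :
    unifOn a b m S = ENNReal.ofReal (m / (b - a)) * volume (S ∩ Ioo a b) := by
  rw [unifOn, Measure.smul_apply, Measure.restrict_apply' measurableSet_Ioo, smul_eq_mul]

theorem unifOn_of_subset (hab : a < b) (h : Ioo a b ⊆ S) : unifOn a b m S = ENNReal.ofReal m := by
  rw [unifOn_apply, inter_eq_right.2 h, Real.volume_Ioo,
    ← ENNReal.ofReal_mul' (sub_nonneg.2 hab.le), div_mul_cancel₀ _ (sub_ne_zero.2 hab.ne')]

theorem unifOn_le (hab : a < b) (S : Set ℝ) : unifOn a b m S ≤ ENNReal.ofReal m :=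
  (measure_mono (subset_univ S)).trans (unifOn_of_subset hab (subset_univ _)).le

theorem unifOn_of_disjoint (h : Disjoint S (Ioo a b)) : unifOn a b m S = 0 := by
  rw [unifOn_apply, h.inter_eq, measure_empty, mul_zero]

theorem unifOn_le_volume_inter (hab : a ≤ b) (hm : m ≤ b - a) (S : Set ℝ) :
    unifOn a b m S ≤ volume (S ∩ Ioo a b) := by
  rw [unifOn_apply]
  calc _ ≤ 1 * volume (S ∩ Ioo a b) := by
        gcongr
        exact ENNReal.ofReal_le_one.2 (div_le_one_of_le₀ hm (sub_nonneg.2 hab))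
    _ = _ := one_mul _

end unifOn

section w1

variable {ε : ℝ}

theorem w1_apply (ε : ℝ) (S : Set ℝ) :
    w1 ε S = unifOn 0 ε (1/2 - ε) S + unifOn (2/3) (2/3 + 3*ε) (3*ε) S
      + unifOn (1-ε) 1 (1/2 - 2*ε) S := by
  rw [w1, Measure.add_apply, Measure.add_apply]

theorem w1_Ioo_zero (hε : 0 < ε) (hε' : ε < 1/20) {t : ℝ} (hεt : ε ≤ t) (ht : t ≤ 2/3) :
    w1 ε (Ioo 0 t) = ENNReal.ofReal (1/2 - ε) := by
  rw [w1_apply, unifOn_of_subset hε (Ioo_subset_Ioo_right hεt),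
    unifOn_of_disjoint (Ioo_disjoint_Ioo_of_le ht),
    unifOn_of_disjoint (Ioo_disjoint_Ioo_of_le (by linarith)), add_zero, add_zero]

theorem w1_Ioo_two_thirds_one (hε : 0 < ε) (hε' : ε < 1/20) :
    w1 ε (Ioo (2/3) 1) = ENNReal.ofReal (1/2 + ε) := by
  rw [w1_apply,
    unifOn_of_disjoint (Ioo_disjoint_Ioo_of_le (by linarith)).symm,
    unifOn_of_subset (by linarith) (Ioo_subset_Ioo_right (by linarith)),
    unifOn_of_subset (by linarith) (Ioo_subset_Ioo_left (by linarith)), zero_add,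
    ← ENNReal.ofReal_add (by linarith) (by linarith)]
  ring_nf

theorem w1_Ioo_one_lt (hε : 0 < ε) (hε' : ε < 1/20) {a : ℝ} (ha : 2/3 + 2*ε < a) :
    w1 ε (Ioo a 1) < ENNReal.ofReal (1/2 - ε) := by
  rw [w1_apply,
    unifOn_of_disjoint (Ioo_disjoint_Ioo_of_le (by linarith)).symm, zero_add]
  have hmid : unifOn (2/3) (2/3 + 3*ε) (3*ε) (Ioo a 1) < ENNReal.ofReal ε :=
    calc _ ≤ volume (Ioo a 1 ∩ Ioo (2/3) (2/3 + 3*ε)) :=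
          unifOn_le_volume_inter (by linarith) (by linarith) _
      _ ≤ volume (Ioo a (2/3 + 3*ε)) := measure_mono fun x hx => ⟨hx.1.1, hx.2.2⟩
      _ < ENNReal.ofReal ε := by
          rw [Real.volume_Ioo, ENNReal.ofReal_lt_ofReal_iff hε]
          linarith
  have hright : unifOn (1-ε) 1 (1/2 - 2*ε) (Ioo a 1) ≤ ENNReal.ofReal (1/2 - 2*ε) :=
    unifOn_le (by linarith) _
  calc _ < ENNReal.ofReal ε + ENNReal.ofReal (1/2 - 2*ε) :=
        ENNReal.add_lt_add_of_lt_of_le (ne_top_of_le_ne_top ENNReal.ofReal_ne_top hright)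
          hmid hright
    _ = ENNReal.ofReal (1/2 - ε) := by
        rw [← ENNReal.ofReal_add hε.le (by linarith)]
        ring_nf

end w1

section vEg3

variable {ε : ℝ} {d : ConnDiv 3}

theorem vEg3_of_ne_zero {i : Fin 3} (hi : i ≠ 0) : vEg3 ε i = wU := by
  fin_cases i
  exacts [absurd rfl hi, rfl, rfl]

theorem EnvyFree.vEg3_eq_zero_of_pieces_eq_Ioo_one (hε : 0 < ε) (hε' : ε < 1/20)
    (hc : d.Complete) (hEF : EnvyFree (vEg3 ε) d) {k : Fin 3} {a : ℝ}
    (hk : d.pieces k = Ioo a 1) : k = 0 := by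
  by_contra hk0
  have hlen : 1/3 ≤ 1 - a := by
    exact_mod_cast hEF.one_div_le_of_eq_wU hc (vEg3_of_ne_zero hk0) hk
  have hown : d.pieces 0 ⊆ Ioo 0 (2/3) :=
    (d.subset_Ioo_of_eq_Ioo_one (Ne.symm hk0) hk).trans (Ioo_subset_Ioo_right (by linarith))
  have henvy : w1 ε (Ioo (2/3) 1) ≤ w1 ε (Ioo 0 (2/3)) :=
    calc _ ≤ w1 ε (d.pieces k) := hk ▸ measure_mono (Ioo_subset_Ioo_left (by linarith))
      _ ≤ w1 ε (d.pieces 0) := hEF 0 k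
      _ ≤ _ := measure_mono hown
  rw [w1_Ioo_two_thirds_one hε hε', w1_Ioo_zero hε hε' (by linarith) le_rfl,
    ENNReal.ofReal_le_ofReal_iff (by linarith)] at henvy
  linarith

theorem EnvyFree.vEg3_le_of_pieces_zero_eq_Ioo_one (hε : 0 < ε) (hε' : ε < 1/20)
    (hc : d.Complete) (hEF : EnvyFree (vEg3 ε) d) {a : ℝ} (ha1 : a < 1)
    (h0 : d.pieces 0 = Ioo a 1) : a ≤ 2/3 + 2*ε := by
  by_contra! ha
  obtain ⟨j, b, hb, hj⟩ := hc.exists_eq_zero_Ioo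
  have hj0 : j ≠ 0 := by
    rintro rfl
    have hinf := congrArg sInf (hj.symm.trans h0)
    rw [csInf_Ioo hb, csInf_Ioo ha1] at hinf
    linarith
  have hlen : 1/3 ≤ b - 0 := by
    exact_mod_cast hEF.one_div_le_of_eq_wU hc (vEg3_of_ne_zero hj0) hj
  have henvy : w1 ε (Ioo 0 (1/3)) ≤ w1 ε (Ioo a 1) :=
    calc _ ≤ w1 ε (d.pieces j) := hj ▸ measure_mono (Ioo_subset_Ioo_right (by linarith))
      _ ≤ w1 ε (d.pieces 0) := hEF 0 j
      _ = _ := by rw [h0]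
  rw [w1_Ioo_zero hε hε' (by linarith) (by norm_num)] at henvy
  exact (w1_Ioo_one_lt hε hε' ha).not_ge henvy

end vEg3

/-- In the 3-player construction, in every envy-free complete connected
division player 1 receives the rightmost piece, and this piece contains the
interval `(2/3 + 2ε, 1)`. -/
theorem player1_gets_rightmost (ε : ℝ) (hε : 0 < ε) (hε' : ε < 1/20)
    (d : ConnDiv 3) (hc : d.Complete) (hEF : EnvyFree (vEg3 ε) d) :
    (∃ a : ℝ, a < 1 ∧ d.pieces 0 = Set.Ioo a 1) ∧
    Set.Ioo (2/3 + 2*ε) 1 ⊆ d.pieces 0 := by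
  obtain ⟨k, a, ha1, hk⟩ := hc.exists_eq_Ioo_one
  obtain rfl : k = 0 := hEF.vEg3_eq_zero_of_pieces_eq_Ioo_one hε hε' hc hk
  exact ⟨⟨a, ha1, hk⟩,
    hk ▸ Ioo_subset_Ioo_left (hEF.vEg3_le_of_pieces_zero_eq_Ioo_one hε hε' hc ha1 hk)⟩
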